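/- Let G be a group, R a unital ring, and {α_g, D_g} a unital partial action of G on R such that (a) D_g D_h = (0) for all g ≠ h with g, h ≠ e, and (b) the set {1_g : g ∈ G} of identities of the ideals D_g is finite. Then for any normal subgroup N of G, the induced G/N-grading of the unital partial skew group ring R ⋆_α G is an epsilon-crossed product: for each coset C, the component S_C contains an epsilon-invertible element s (i.e., there exists t ∈ S_{C^{-1}} with st = ε_C and ts = ε_{C^{-1}}). -/

import Mathlib

open scoped Classical

noncomputable section

/-- The underlying additive group of the partial skew group ring `R ⋆_α G = ⊕_g D_g δ_g`,
realized as finitely supported functions `G → R`. Here the unital ideal `D_g` is encoded by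
its (central idempotent) identity element `e1 g`, as `D_g = e1 g * R`. -/
abbrev SkewA (G R : Type*) [Group G] [Ring R] : Type _ := Π₀ _ : G, R

/-- The multiplication of the partial skew group ring:
`(a δ_g)(b δ_h) = a α_g(b 1_{g⁻¹}) δ_{gh}`. -/
def mulA {G R : Type*} [Group G] [DecidableEq G] [Ring R]
    (e1 : G → R) (α : G → R → R) (x y : SkewA G R) : SkewA G R :=
  x.sum fun g a => y.sum fun h b => DFinsupp.single (g * h) (a * α g (b * e1 g⁻¹))

/-- The additive subgroup generated by products `u * v`, `u ∈ U`, `v ∈ V`, with respect to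
the skew multiplication. -/
def mulSubA {G R : Type*} [Group G] [DecidableEq G] [Ring R]
    (e1 : G → R) (α : G → R → R) (U V : AddSubgroup (SkewA G R)) :
    AddSubgroup (SkewA G R) :=
  AddSubgroup.closure (Set.image2 (mulA e1 α) (U : Set (SkewA G R)) (V : Set (SkewA G R)))

/-- The component `S_C = ⊕_{g ∈ C} D_g δ_g` of the induced `G/N`-grading. -/
def SC {G R : Type*} [Group G] [DecidableEq G] [Ring R]
    (e1 : G → R) (N : Subgroup G) (C : G ⧸ N) : AddSubgroup (SkewA G R) :=
  AddSubgroup.closure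
    {x | ∃ (g : G) (a : R), (g : G ⧸ N) = C ∧ e1 g * a = a ∧ x = DFinsupp.single g a}

/-!
For `C ≠ 1`, orthogonality makes `(a δ_g)(b δ_h)` vanish for `g ∈ C`, `h ∈ C⁻¹` unless `h = g⁻¹`.
Since `g ↦ 1_g` is injective on `{g ≠ e | 1_g ≠ 0}` (two distinct such idempotents are orthogonal),
finiteness of `{1_g}` makes `s = ∑_{g ∈ C, 1_g ≠ 0} 1_g δ_g` a finite sum, and with `t` the
analogous element of `S_{C⁻¹}` we get `s t = (∑ 1_g) δ_e`. This central idempotent acts as the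
identity on `S_C S_{C⁻¹} ⊆ (∑_{g ∈ C} D_g) δ_e`. For `C = 1` take `s = t = 1 δ_e`, the identity of
`R ⋆_α G`.
-/

theorem AddSubgroup.closure_image2_closure_le {A B C : Type*} [AddCommGroup A]
    [AddCommGroup B] [AddCommGroup C] (f : A →+ B →+ C) {S : Set A} {T : Set B}
    {K : AddSubgroup C} (h : ∀ a ∈ S, ∀ b ∈ T, f a b ∈ K) :
    AddSubgroup.closure (Set.image2 (fun a b => f a b) (AddSubgroup.closure S)
      (AddSubgroup.closure T)) ≤ K := by
  rw [AddSubgroup.closure_le]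
  rintro _ ⟨a, ha, b, hb, rfl⟩
  have hT : ∀ a' ∈ S, AddSubgroup.closure T ≤ K.comap (f a') := fun a' ha' =>
    (AddSubgroup.closure_le _).mpr fun b' hb' => h a' ha' b' hb'
  have hS : AddSubgroup.closure S ≤ K.comap (f.flip b) :=
    (AddSubgroup.closure_le _).mpr fun a' ha' => hT a' ha' hb
  exact hS ha

namespace PartialSkewGroupRing

variable {G R : Type*} [Group G] [Ring R] {e1 : G → R} {α : G → R → R}

def AdditiveOnIdeals (e1 : G → R) (α : G → R → R) : Prop :=
  ∀ (g : G) (x y : R), α g (x * e1 g⁻¹ + y * e1 g⁻¹) = α g (x * e1 g⁻¹) + α g (y * e1 g⁻¹)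

variable (hα : AdditiveOnIdeals e1 α)
  (he1idem : ∀ g : G, e1 g * e1 g = e1 g)
  (he1central : ∀ g : G, ∀ r : R, e1 g * r = r * e1 g)
  (he1one : e1 (1 : G) = 1)
  (halphaone : ∀ x : R, α 1 x = x)
  (hmul : ∀ g : G, ∀ x y : R,
    α g ((e1 g⁻¹ * x) * (e1 g⁻¹ * y)) = α g (e1 g⁻¹ * x) * α g (e1 g⁻¹ * y))
  (hcond2 : ∀ g h : G, α g (e1 g⁻¹ * e1 h) = e1 g * e1 (g * h))
  (horth : ∀ g h : G, g ≠ h → g ≠ 1 → h ≠ 1 → e1 g * e1 h = 0)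

include hα in
theorem AdditiveOnIdeals.map_zero (g : G) : α g 0 = 0 := by
  have h := hα g 0 0
  simp only [zero_mul, add_zero] at h
  exact left_eq_add.mp h

include hα he1one hcond2 in
theorem e1_inv_eq_zero {g : G} (hg : e1 g = 0) : e1 g⁻¹ = 0 := by
  have h := hcond2 g⁻¹ g
  rw [inv_inv, hg, mul_zero, hα.map_zero, inv_mul_cancel, he1one, mul_one] at h
  exact h.symm

include he1idem he1one hcond2 in
theorem alpha_e1_inv (g : G) : α g (e1 g⁻¹) = e1 g := by
  simpa only [he1one, mul_one, he1idem] using hcond2 g 1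

include he1idem he1central hmul hcond2 in
theorem e1_mul_alpha {g h : G} {b : R} (hb : e1 h * b = b) :
    e1 (g * h) * α g (b * e1 g⁻¹) = α g (b * e1 g⁻¹) := by
  have hsplit : (e1 g⁻¹ * e1 h) * (e1 g⁻¹ * b) = b * e1 g⁻¹ := by
    rw [he1central g⁻¹ b, mul_assoc, ← mul_assoc (e1 h), hb, ← mul_assoc,
      he1central g⁻¹ b, mul_assoc, he1idem]
  have hx : α g (b * e1 g⁻¹) = e1 g * e1 (g * h) * α g (b * e1 g⁻¹) := by
    have h3 := hmul g (e1 h) b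
    rwa [hsplit, hcond2, he1central g⁻¹ b] at h3
  rw [hx, ← mul_assoc, ← mul_assoc, he1central (g * h) (e1 g), mul_assoc (e1 g), he1idem]

include hα he1central horth in
theorem alpha_eq_zero_of_ne_inv {g h : G} {b : R} (hb : e1 h * b = b) (hgh : h ≠ g⁻¹)
    (hg : g ≠ 1) (hh : h ≠ 1) : α g (b * e1 g⁻¹) = 0 := by
  have hzero : b * e1 g⁻¹ = 0 := by
    rw [← hb, ← he1central g⁻¹, ← mul_assoc,
      horth g⁻¹ h (Ne.symm hgh) (inv_ne_one.mpr hg) hh, zero_mul]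
  rw [hzero, hα.map_zero]

include he1idem horth in
theorem finite_setOf_e1_ne_zero (hfin : (Set.range e1).Finite) :
    {g : G | g ≠ 1 ∧ e1 g ≠ 0}.Finite := by
  refine Set.Finite.of_finite_image (hfin.subset (Set.image_subset_range _ _))
    fun g hg h hh hgh => ?_
  by_contra hne
  have hgh0 := horth g h hne hg.1 hh.1
  rw [hgh, he1idem] at hgh0
  exact hh.2 hgh0

variable [DecidableEq G]

include hα in
theorem mulA_single_single (g h : G) (a b : R) :
    mulA e1 α (DFinsupp.single g a) (DFinsupp.single h b) =
      DFinsupp.single (g * h) (a * α g (b * e1 g⁻¹)) := by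
  rw [mulA, DFinsupp.sum_single_index (by simp [DFinsupp.sum]),
    DFinsupp.sum_single_index (by simp [hα.map_zero])]

include hα he1one halphaone in
theorem mulA_single_one_left (r : R) (k : G) (c : R) :
    mulA e1 α (DFinsupp.single 1 r) (DFinsupp.single k c) = DFinsupp.single k (r * c) := by
  rw [mulA_single_single hα, one_mul, inv_one, he1one, mul_one, halphaone]

theorem mulA_add_left (x x' y : SkewA G R) :
    mulA e1 α (x + x') y = mulA e1 α x y + mulA e1 α x' y := by
  refine DFinsupp.sum_add_index (fun g => by simp [DFinsupp.sum]) fun g a a' => ?_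
  rw [← DFinsupp.sum_add]
  congr 1
  funext h b
  rw [add_mul, DFinsupp.single_add]

include hα in
theorem mulA_add_right (x y y' : SkewA G R) :
    mulA e1 α x (y + y') = mulA e1 α x y + mulA e1 α x y' := by
  rw [mulA, mulA, mulA, ← DFinsupp.sum_add]
  congr 1
  funext g a
  refine DFinsupp.sum_add_index (fun h => by simp [hα.map_zero]) fun h b b' => ?_
  rw [add_mul, hα, mul_add, DFinsupp.single_add]

def mulHom : SkewA G R →+ SkewA G R →+ SkewA G R :=
  AddMonoidHom.mk' (fun x => AddMonoidHom.mk' (mulA e1 α x) (mulA_add_right hα x))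
    fun x x' => AddMonoidHom.ext (mulA_add_left x x')

theorem mulHom_apply (x y : SkewA G R) : mulHom hα x y = mulA e1 α x y := rfl

def fixedByMul (w : SkewA G R) : AddSubgroup (SkewA G R) :=
  (mulHom hα w - AddMonoidHom.id _).ker ⊓ ((mulHom hα).flip w - AddMonoidHom.id _).ker

variable {hα} in
theorem mem_fixedByMul {w z : SkewA G R} :
    z ∈ fixedByMul hα w ↔ mulA e1 α w z = z ∧ mulA e1 α z w = z := by
  simp [fixedByMul, mulHom, sub_eq_zero]

include hα in
theorem mulSubA_SC_le {N : Subgroup G} {C C' : G ⧸ N} {K : AddSubgroup (SkewA G R)}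
    (hgen : ∀ (g : G) (a : R) (h : G) (b : R), (g : G ⧸ N) = C → e1 g * a = a →
      (h : G ⧸ N) = C' → e1 h * b = b → DFinsupp.single (g * h) (a * α g (b * e1 g⁻¹)) ∈ K) :
    mulSubA e1 α (SC e1 N C) (SC e1 N C') ≤ K := by
  refine AddSubgroup.closure_image2_closure_le (mulHom hα) ?_
  rintro _ ⟨g, a, hg, ha, rfl⟩ _ ⟨h, b, hh, hb, rfl⟩
  rw [mulHom_apply, mulA_single_single hα]
  exact hgen g a h b hg ha hh hb

include hα he1idem he1central he1one halphaone hmul hcond2 in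
theorem mulSubA_SC_le_fixedByMul_single_one {N : Subgroup G} (C C' : G ⧸ N) :
    mulSubA e1 α (SC e1 N C) (SC e1 N C') ≤ fixedByMul hα (DFinsupp.single 1 1) := by
  refine mulSubA_SC_le hα fun g a h b _ _ _ hb => mem_fixedByMul.mpr ⟨?_, ?_⟩
  · rw [mulA_single_one_left hα he1one halphaone, one_mul]
  · rw [mulA_single_single hα, mul_one, one_mul, alpha_e1_inv he1idem he1one hcond2,
      ← he1central, ← mul_assoc, he1central (g * h) a, mul_assoc,
      e1_mul_alpha he1idem he1central hmul hcond2 hb]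

section Cosets

variable (e1) (F : Finset G) (N : Subgroup G)

def cosetSupport (C : G ⧸ N) : Finset G :=
  F.filter fun g => g ≠ 1 ∧ e1 g ≠ 0 ∧ (g : G ⧸ N) = C

def cosetUnit (C : G ⧸ N) : SkewA G R :=
  ∑ g ∈ cosetSupport e1 F N C, DFinsupp.single g (e1 g)

def cosetIdem (C : G ⧸ N) : R :=
  ∑ g ∈ cosetSupport e1 F N C, e1 g

variable {e1 F N} {C : G ⧸ N} (hF : ∀ g : G, g ≠ 1 → e1 g ≠ 0 → g ∈ F)

include he1idem in
theorem cosetUnit_mem_SC : cosetUnit e1 F N C ∈ SC e1 N C :=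
  AddSubgroup.sum_mem _ fun g hg => AddSubgroup.subset_closure
    ⟨g, e1 g, (Finset.mem_filter.mp hg).2.2.2, he1idem g, rfl⟩

include he1central in
theorem cosetIdem_mul_comm (r : R) : cosetIdem e1 F N C * r = r * cosetIdem e1 F N C := by
  simp only [cosetIdem, Finset.sum_mul, Finset.mul_sum, he1central]

include hF in
theorem mem_cosetSupport {g : G} :
    g ∈ cosetSupport e1 F N C ↔ g ≠ 1 ∧ e1 g ≠ 0 ∧ (g : G ⧸ N) = C := by
  rw [cosetSupport, Finset.mem_filter, and_iff_right_iff_imp]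
  exact fun hg => hF g hg.1 hg.2.1

include hF hα he1one hcond2 in
theorem inv_mem_cosetSupport [N.Normal] {g : G} (hg : g ∈ cosetSupport e1 F N C) :
    g⁻¹ ∈ cosetSupport e1 F N C⁻¹ := by
  obtain ⟨hg1, hg0, hgC⟩ := (mem_cosetSupport hF).mp hg
  refine (mem_cosetSupport hF).mpr ⟨inv_ne_one.mpr hg1, fun h0 => hg0 ?_, hgC ▸ rfl⟩
  simpa only [inv_inv] using e1_inv_eq_zero hα he1one hcond2 h0

include hF horth in
theorem cosetIdem_mul_of_e1_mul {g : G} {c : R} (hg : g ≠ 1) (hgC : (g : G ⧸ N) = C)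
    (hc : e1 g * c = c) : cosetIdem e1 F N C * c = c := by
  by_cases hg0 : e1 g = 0
  · rw [← hc, hg0, zero_mul, mul_zero]
  rw [cosetIdem, Finset.sum_mul,
    Finset.sum_eq_single_of_mem g ((mem_cosetSupport hF).mpr ⟨hg, hg0, hgC⟩), hc]
  intro g' hg' hne
  rw [← hc, ← mul_assoc, horth g' g hne ((mem_cosetSupport hF).mp hg').1 hg, zero_mul]

include hF hα he1idem he1central he1one hcond2 horth in
theorem mulA_cosetUnit_cosetUnit_inv [N.Normal] :
    mulA e1 α (cosetUnit e1 F N C) (cosetUnit e1 F N C⁻¹) =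
      DFinsupp.single 1 (cosetIdem e1 F N C) := by
  have hterm : ∀ g ∈ cosetSupport e1 F N C,
      mulA e1 α (DFinsupp.single g (e1 g)) (cosetUnit e1 F N C⁻¹) = DFinsupp.single 1 (e1 g) := by
    intro g hg
    rw [cosetUnit, ← mulHom_apply hα, map_sum,
      Finset.sum_eq_single_of_mem g⁻¹ (inv_mem_cosetSupport hα he1one hcond2 hF hg)]
    · rw [mulHom_apply, mulA_single_single hα, mul_inv_cancel, he1idem,
        alpha_e1_inv he1idem he1one hcond2, he1idem]
    · intro h hh hne
      rw [mulHom_apply, mulA_single_single hα, alpha_eq_zero_of_ne_inv hα he1central horth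
        (he1idem h) hne ((mem_cosetSupport hF).mp hg).1 ((mem_cosetSupport hF).mp hh).1,
        mul_zero, DFinsupp.single_zero]
  rw [cosetUnit, ← mulHom_apply hα, map_sum, AddMonoidHom.finsetSum_apply]
  simp only [mulHom_apply]
  rw [Finset.sum_congr rfl hterm, cosetIdem]
  exact (map_sum (DFinsupp.singleAddHom (fun _ : G => R) 1) _ _).symm

include hF hα he1central he1one halphaone horth in
theorem mulSubA_SC_le_fixedByMul_cosetIdem [N.Normal] (hC : C ≠ 1) :
    mulSubA e1 α (SC e1 N C) (SC e1 N C⁻¹) ≤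
      fixedByMul hα (DFinsupp.single 1 (cosetIdem e1 F N C)) := by
  refine mulSubA_SC_le hα fun g a h b hgC ha hhC hb => ?_
  have hg1 : g ≠ 1 := fun hg => hC (by rw [← hgC, hg, QuotientGroup.mk_one])
  have hh1 : h ≠ 1 := fun hh => inv_ne_one.mpr hC (by rw [← hhC, hh, QuotientGroup.mk_one])
  by_cases hgh : h = g⁻¹
  · subst hgh
    have hc : cosetIdem e1 F N C * (a * α g (b * e1 g⁻¹)) = a * α g (b * e1 g⁻¹) :=
      cosetIdem_mul_of_e1_mul horth hF hg1 hgC (by rw [← mul_assoc, ha])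
    rw [mul_inv_cancel, mem_fixedByMul, mulA_single_one_left hα he1one halphaone,
      mulA_single_one_left hα he1one halphaone, ← cosetIdem_mul_comm he1central, hc]
    exact ⟨rfl, rfl⟩
  · rw [alpha_eq_zero_of_ne_inv hα he1central horth hb hgh hg1 hh1, mul_zero,
      DFinsupp.single_zero]
    exact zero_mem _

end Cosets

end PartialSkewGroupRing

open PartialSkewGroupRing

theorem stmt19_general {G : Type*} [Group G] [DecidableEq G] {R : Type*} [Ring R]
    (e1 : G → R) (α : G → R → R)
    (he1idem : ∀ g : G, e1 g * e1 g = e1 g)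
    (he1central : ∀ g : G, ∀ r : R, e1 g * r = r * e1 g)
    (he1one : e1 (1 : G) = 1)
    (halphaone : ∀ x : R, α 1 x = x)
    (hadd : ∀ g : G, ∀ x y : R,
      α g (e1 g⁻¹ * x + e1 g⁻¹ * y) = α g (e1 g⁻¹ * x) + α g (e1 g⁻¹ * y))
    (hmul : ∀ g : G, ∀ x y : R,
      α g ((e1 g⁻¹ * x) * (e1 g⁻¹ * y)) = α g (e1 g⁻¹ * x) * α g (e1 g⁻¹ * y))
    (hcond2 : ∀ g h : G, α g (e1 g⁻¹ * e1 h) = e1 g * e1 (g * h))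
    (horth : ∀ g h : G, g ≠ h → g ≠ 1 → h ≠ 1 → e1 g * e1 h = 0)
    (hfin : (Set.range e1).Finite)
    (N : Subgroup G) [N.Normal] :
    ∀ C : G ⧸ N, ∃ s ∈ SC e1 N C, ∃ t ∈ SC e1 N C⁻¹,
      (∀ z ∈ mulSubA e1 α (SC e1 N C) (SC e1 N C⁻¹),
        mulA e1 α (mulA e1 α s t) z = z ∧ mulA e1 α z (mulA e1 α s t) = z) ∧
      (∀ z ∈ mulSubA e1 α (SC e1 N C⁻¹) (SC e1 N C),
        mulA e1 α (mulA e1 α t s) z = z ∧ mulA e1 α z (mulA e1 α t s) = z) := by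
  have hα : AdditiveOnIdeals e1 α := fun g x y => by
    rw [← he1central g⁻¹ x, ← he1central g⁻¹ y]
    exact hadd g x y
  obtain ⟨F, hF⟩ : ∃ F : Finset G, ∀ g : G, g ≠ 1 → e1 g ≠ 0 → g ∈ F :=
    ⟨(finite_setOf_e1_ne_zero he1idem horth hfin).toFinset, fun g hg hg0 => by simp [hg, hg0]⟩
  intro C
  by_cases hC : C = 1
  · subst hC
    have hone : DFinsupp.single (1 : G) (1 : R) ∈ SC e1 N 1 :=
      AddSubgroup.subset_closure ⟨1, 1, rfl, by rw [he1one, one_mul], rfl⟩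
    have hfix := mulSubA_SC_le_fixedByMul_single_one hα he1idem he1central he1one halphaone
      hmul hcond2 (1 : G ⧸ N) 1
    rw [inv_one]
    refine ⟨_, hone, _, hone, ?_, ?_⟩ <;>
      rw [mulA_single_one_left hα he1one halphaone, mul_one] <;>
      exact fun z hz => mem_fixedByMul.mp (hfix hz)
  · have hst := mulA_cosetUnit_cosetUnit_inv hα he1idem he1central he1one hcond2 horth hF
      (C := C)
    have hts := mulA_cosetUnit_cosetUnit_inv hα he1idem he1central he1one hcond2 horth hF
      (C := C⁻¹)
    have hfix := mulSubA_SC_le_fixedByMul_cosetIdem hα he1central he1one halphaone horth hF hC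
    have hfix' := mulSubA_SC_le_fixedByMul_cosetIdem hα he1central he1one halphaone horth hF
      (inv_ne_one.mpr hC)
    rw [inv_inv] at hts hfix'
    refine ⟨cosetUnit e1 F N C, cosetUnit_mem_SC he1idem, cosetUnit e1 F N C⁻¹,
      cosetUnit_mem_SC he1idem, ?_, ?_⟩
    · rw [hst]
      exact fun z hz => mem_fixedByMul.mp (hfix hz)
    · rw [hts]
      exact fun z hz => mem_fixedByMul.mp (hfix' hz)

/-- Let `{α_g, D_g}` be a unital partial action of `G` on a unital ring `R` (with `D_g` the
unital ideal with central identity `1_g = e1 g`) such that (a) `D_g D_h = 0` for `g ≠ h`,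
`g, h ≠ e`, and (b) `{1_g : g ∈ G}` is finite. Then for any normal subgroup `N` of `G` the
induced `G/N`-grading of `R ⋆_α G` is an epsilon-crossed product: each component `S_C`
contains an epsilon-invertible element `s`, i.e. there is `t ∈ S_{C⁻¹}` with `s t = ε_C`
(the identity of `S_C S_{C⁻¹}`) and `t s = ε_{C⁻¹}` (the identity of `S_{C⁻¹} S_C`). -/
theorem stmt19 {G : Type*} [Group G] [DecidableEq G] {R : Type*} [Ring R]
    (e1 : G → R) (α : G → R → R)
    (he1idem : ∀ g : G, e1 g * e1 g = e1 g)
    (he1central : ∀ g : G, ∀ r : R, e1 g * r = r * e1 g)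
    (he1one : e1 (1 : G) = 1)
    (halphaone : ∀ x : R, α 1 x = x)
    (hrange : ∀ g : G, ∀ x : R, e1 g * α g (e1 g⁻¹ * x) = α g (e1 g⁻¹ * x))
    (hadd : ∀ g : G, ∀ x y : R,
      α g (e1 g⁻¹ * x + e1 g⁻¹ * y) = α g (e1 g⁻¹ * x) + α g (e1 g⁻¹ * y))
    (hmul : ∀ g : G, ∀ x y : R,
      α g ((e1 g⁻¹ * x) * (e1 g⁻¹ * y)) = α g (e1 g⁻¹ * x) * α g (e1 g⁻¹ * y))
    (hinv : ∀ g : G, ∀ x : R, α g⁻¹ (α g (e1 g⁻¹ * x)) = e1 g⁻¹ * x)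
    (hcond2 : ∀ g h : G, α g (e1 g⁻¹ * e1 h) = e1 g * e1 (g * h))
    (hcond3 : ∀ g h : G, ∀ x : R,
      α g (α h (e1 h⁻¹ * (e1 (g * h)⁻¹ * x))) = α (g * h) (e1 h⁻¹ * (e1 (g * h)⁻¹ * x)))
    (horth : ∀ g h : G, g ≠ h → g ≠ 1 → h ≠ 1 → e1 g * e1 h = 0)
    (hfin : (Set.range e1).Finite)
    (N : Subgroup G) [N.Normal] :
    ∀ C : G ⧸ N, ∃ s ∈ SC e1 N C, ∃ t ∈ SC e1 N C⁻¹,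
      (∀ z ∈ mulSubA e1 α (SC e1 N C) (SC e1 N C⁻¹),
        mulA e1 α (mulA e1 α s t) z = z ∧ mulA e1 α z (mulA e1 α s t) = z) ∧
      (∀ z ∈ mulSubA e1 α (SC e1 N C⁻¹) (SC e1 N C),
        mulA e1 α (mulA e1 α t s) z = z ∧ mulA e1 α z (mulA e1 α t s) = z) :=
  stmt19_general e1 α he1idem he1central he1one halphaone hadd hmul hcond2 horth hfin N

end
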